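/- Let α₀ > 0 be the unique positive root of α(exp(α) - 1) = 1 + exp(α). For every α with 1 < α ≤ α₀, one has log((α - 1)/(α + 1)) ≤ -α; consequently f_α(z) = 1 / (1 + exp(z)) + α · exp(z) / (1 + exp(z))² is monotonically decreasing on the feasible margin interval [-α, α], similarly to the loss representation's discriminative power. -/

import Mathlib

/-- The upper bound on the gradient representation's discriminative power:
`f_α(z) = 1 / (1 + exp z) + α exp z / (1 + exp z)²`. -/
noncomputable def discPowerBound (α z : ℝ) : ℝ :=
  1 / (1 + Real.exp z) + α * Real.exp z / (1 + Real.exp z) ^ 2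

/-!
Writing `u = exp z`, one computes `f_α'(z) = u ((α - 1) - (α + 1) u) / (1 + u)³`, so `f_α` decreases
to the right of its peak `log ((α - 1) / (α + 1))`. The defining function
`g(x) = x (exp x - 1) - (1 + exp x)` of `α₀` has `g'(x) = x exp x - 1 > 0` for `x > 1`, so
`g(α) ≤ g(α₀) = 0` for `1 ≤ α ≤ α₀`; after multiplying by `exp (-α)` this says that the peak lies
at or left of `-α`.
-/

open Real Set

theorem monotoneOn_mul_exp_sub_one_sub_one_add_exp :
    MonotoneOn (fun x : ℝ => x * (exp x - 1) - (1 + exp x)) (Ici 1) := by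
  have hderiv (x : ℝ) : HasDerivAt (fun x : ℝ => x * (exp x - 1) - (1 + exp x))
      (x * exp x - 1) x :=
    (((hasDerivAt_id' x).mul ((hasDerivAt_exp x).sub_const 1)).sub
      ((hasDerivAt_exp x).const_add 1)).congr_deriv (by ring)
  refine monotoneOn_of_deriv_nonneg (convex_Ici 1)
    (fun x _ => (hderiv x).continuousAt.continuousWithinAt)
    (fun x _ => (hderiv x).differentiableAt.differentiableWithinAt) fun x hx => ?_
  rw [interior_Ici, mem_Ioi] at hx
  rw [(hderiv x).deriv, sub_nonneg]
  exact one_le_mul_of_one_le_of_one_le hx.le (one_le_exp (by linarith))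

theorem sub_one_le_add_one_mul_exp_neg_of_le_root {α₀ α : ℝ}
    (hroot : α₀ * (exp α₀ - 1) = 1 + exp α₀) (h1 : 1 ≤ α) (h2 : α ≤ α₀) :
    α - 1 ≤ (α + 1) * exp (-α) := by
  have hle : α * (exp α - 1) - (1 + exp α) ≤ α₀ * (exp α₀ - 1) - (1 + exp α₀) :=
    monotoneOn_mul_exp_sub_one_sub_one_add_exp h1 (h1.trans h2) h2
  rw [exp_neg, ← div_eq_mul_inv, le_div_iff₀ (exp_pos α)]
  linarith

theorem hasDerivAt_discPowerBound (α z : ℝ) :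
    HasDerivAt (discPowerBound α)
      (exp z * ((α - 1) - (α + 1) * exp z) / (1 + exp z) ^ 3) z := by
  have hpos : 0 < 1 + exp z := by positivity
  have hden : HasDerivAt (fun z => 1 + exp z) (exp z) z := (hasDerivAt_exp z).const_add 1
  refine (((hasDerivAt_const z 1).fun_div hden hpos.ne').add
    (((hasDerivAt_exp z).const_mul α).fun_div (hden.fun_pow 2)
      (pow_ne_zero 2 hpos.ne'))).congr_deriv ?_
  field_simp
  ring

theorem discPowerBound_antitoneOn_Ici {α c : ℝ} (hα : -1 ≤ α)
    (hc : α - 1 ≤ (α + 1) * exp c) : AntitoneOn (discPowerBound α) (Ici c) := by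
  refine antitoneOn_of_deriv_nonpos (convex_Ici c)
    (fun z _ => (hasDerivAt_discPowerBound α z).continuousAt.continuousWithinAt)
    (fun z _ => (hasDerivAt_discPowerBound α z).differentiableAt.differentiableWithinAt)
    fun z hz => ?_
  rw [interior_Ici, mem_Ioi] at hz
  rw [(hasDerivAt_discPowerBound α z).deriv]
  have hexp : (α + 1) * exp c ≤ (α + 1) * exp z :=
    mul_le_mul_of_nonneg_left (exp_le_exp.mpr hz.le) (by linarith)
  apply div_nonpos_of_nonpos_of_nonneg _ (by positivity)
  exact mul_nonpos_of_nonneg_of_nonpos (exp_pos z).le (by linarith)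

theorem discPowerBound_decreasing_on_feasible_general (α₀ : ℝ)
    (hroot : α₀ * (Real.exp α₀ - 1) = 1 + Real.exp α₀)
    (α : ℝ) (h1 : 1 < α) (h2 : α ≤ α₀) :
    Real.log ((α - 1) / (α + 1)) ≤ -α ∧
    AntitoneOn (discPowerBound α) (Set.Icc (-α) α) := by
  have hpeak := sub_one_le_add_one_mul_exp_neg_of_le_root hroot h1.le h2
  refine ⟨?_, (discPowerBound_antitoneOn_Ici (by linarith) hpeak).mono Icc_subset_Ici_self⟩
  rw [log_le_iff_le_exp (div_pos (by linarith) (by linarith)), div_le_iff₀ (by linarith)]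
  linarith

/-- Let `α₀` be the (unique) positive root of `α (exp α - 1) = 1 + exp α`.
For every `α` with `1 < α ≤ α₀`, the peak `log ((α - 1) / (α + 1))` lies at or
below `-α`, and consequently `f_α` is monotonically decreasing on the feasible
margin interval `[-α, α]`. -/
theorem discPowerBound_decreasing_on_feasible (α₀ : ℝ) (hα₀ : 0 < α₀)
    (hroot : α₀ * (Real.exp α₀ - 1) = 1 + Real.exp α₀)
    (α : ℝ) (h1 : 1 < α) (h2 : α ≤ α₀) :
    Real.log ((α - 1) / (α + 1)) ≤ -α ∧
    AntitoneOn (discPowerBound α) (Set.Icc (-α) α) :=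
  discPowerBound_decreasing_on_feasible_general α₀ hroot α h1 h2
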